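/- arXiv:2205.12433 — 2 statements merged into one kernel-verified Lean document; each statement's English description precedes it below -/
import Mathlib

section
/- Let W : [T1,T2] → ℝ be differentiable and satisfy the Riccati equation W'(t) = A(t)(W(t) - W1(t))(W(t) - W2(t)), where A(t) < 0 and W1(t) ≤ 0 ≤ W2(t) for all t ∈ [T1,T2]. If W(T1) ≥ 0, then for all t ∈ [T1,T2], 0 ≤ W(t) ≤ W(T1) - (1/4)∫_{T1}^{t} A(s)(W2(s)-W1(s))² ds. -/
open Set

theorem stmt0 (T1 T2 : ℝ) (hT : T1 ≤ T2) (A W1 W2 W : ℝ → ℝ)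
    (hA : ∀ t ∈ Icc T1 T2, A t < 0)
    (hW1 : ∀ t ∈ Icc T1 T2, W1 t ≤ 0)
    (hW2 : ∀ t ∈ Icc T1 T2, 0 ≤ W2 t)
    (hAc : ContinuousOn A (Icc T1 T2))
    (hW1c : ContinuousOn W1 (Icc T1 T2))
    (hW2c : ContinuousOn W2 (Icc T1 T2))
    (hode : ∀ t ∈ Icc T1 T2,
      HasDerivAt W (A t * (W t - W1 t) * (W t - W2 t)) t)
    (hinit : 0 ≤ W T1) :
    ∀ t ∈ Icc T1 T2,
      0 ≤ W t ∧
      W t ≤ W T1 - (1/4) * ∫ s in T1..t, A s * (W2 s - W1 s)^2 := by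
  have hWc : ContinuousOn W (Icc T1 T2) :=
    fun t ht => ((hode t ht).continuousAt).continuousWithinAt
  -- bound on A * (W - W2)
  obtain ⟨K, hK⟩ : ∃ K, ∀ t ∈ Icc T1 T2, A t * (W t - W2 t) ≤ K := by
    have hc : ContinuousOn (fun t => A t * (W t - W2 t)) (Icc T1 T2) :=
      hAc.mul (hWc.sub hW2c)
    obtain ⟨K, hK⟩ := isCompact_Icc.exists_bound_of_continuousOn hc
    exact ⟨K, fun t ht => (le_abs_self _).trans (hK t ht)⟩
  -- lower bound
  have hlow : ∀ t ∈ Icc T1 T2, 0 ≤ W t := by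
    by_contra h
    push_neg at h
    obtain ⟨t0, ht0, hWt0⟩ := h
    set S : Set ℝ := Icc T1 t0 ∩ W ⁻¹' Ici 0 with hS
    have hIs : Icc T1 t0 ⊆ Icc T1 T2 := Icc_subset_Icc le_rfl ht0.2
    have hSne : S.Nonempty := ⟨T1, ⟨le_rfl, ht0.1⟩, hinit⟩
    have hSb : BddAbove S := (BddAbove.mono (inter_subset_left) bddAbove_Icc)
    have hScl : IsClosed S :=
      (hWc.mono hIs).preimage_isClosed_of_isClosed isClosed_Icc isClosed_Ici
    set c := sSup S with hc
    have hcS : c ∈ S := hScl.csSup_mem hSne hSb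
    have hcI : c ∈ Icc T1 t0 := hcS.1
    have hcI2 : c ∈ Icc T1 T2 := hIs hcI
    have hWcge : 0 ≤ W c := hcS.2
    have hct0 : c < t0 := by
      rcases lt_or_eq_of_le hcI.2 with h | h
      · exact h
      · exact absurd (h ▸ hWcge) (not_le.2 hWt0)
    have hneg : ∀ z ∈ Ioc c t0, W z < 0 := by
      intro z hz
      by_contra hzn
      push_neg at hzn
      have : z ∈ S := ⟨⟨hcI.1.trans hz.1.le, hz.2⟩, hzn⟩
      exact absurd (le_csSup hSb this) (not_le.2 hz.1)
    -- W c = 0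
    have hWc0 : W c = 0 := by
      have hten : Filter.Tendsto W (nhdsWithin c (Ioc c t0)) (nhds (W c)) :=
        ((hode c hcI2).continuousAt).continuousWithinAt
      have hne : (nhdsWithin c (Ioc c t0)).NeBot := by
        rw [nhdsWithin_Ioc_eq_nhdsGT hct0]
        infer_instance
      have : W c ≤ 0 :=
        le_of_tendsto hten (Filter.eventually_of_mem self_mem_nhdsWithin
          fun z hz => (hneg z hz).le)
      linarith
    have hWle : ∀ x ∈ Icc c t0, W x ≤ 0 := by
      intro x hx
      rcases eq_or_lt_of_le hx.1 with h | h
      · rw [← h, hWc0]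
      · exact (hneg x ⟨h, hx.2⟩).le
    -- Gronwall
    have hsub : Icc c t0 ⊆ Icc T1 T2 := Icc_subset_Icc hcI2.1 ht0.2
    have hG := le_gronwallBound_of_liminf_deriv_right_le
      (f := fun t => -W t)
      (f' := fun t => -(A t * (W t - W1 t) * (W t - W2 t)))
      (δ := 0) (K := K) (ε := 0) (a := c) (b := t0)
      ((hWc.mono hsub).neg)
      (by
        intro x hx r hr
        have hd : HasDerivWithinAt (fun t => -W t)
            (-(A x * (W x - W1 x) * (W x - W2 x))) (Ici x) x :=
          ((hode x (hsub (Ico_subset_Icc_self hx))).neg).hasDerivWithinAt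
        have := hd.liminf_right_slope_le hr
        refine this.mono fun z hz => ?_
        rw [slope_def_field] at hz
        rw [div_eq_inv_mul] at hz
        convert hz using 2 <;> ring)
      (by simp [hWc0])
      (by
        intro x hx
        have hxI : x ∈ Icc T1 T2 := hsub (Ico_subset_Icc_self hx)
        have h1 : W x ≤ 0 := hWle x (Ico_subset_Icc_self hx)
        have h2 : 0 ≤ A x * (W x - W2 x) := by
          nlinarith [mul_nonneg (neg_nonneg.2 (hA x hxI).le)
            (show (0:ℝ) ≤ W2 x - W x by linarith [hW2 x hxI])]
        have h3 : A x * (W x - W2 x) ≤ K := hK x hxI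
        have h4 : W1 x ≤ 0 := hW1 x hxI
        have h5 : 0 ≤ -W x := by linarith
        show -(A x * (W x - W1 x) * (W x - W2 x)) ≤ K * (-W x) + 0
        nlinarith [mul_nonpos_of_nonneg_of_nonpos h2 h4,
          mul_le_mul_of_nonneg_right h3 h5])
    have hfin := hG t0 ⟨hct0.le, le_rfl⟩
    rw [gronwallBound_ε0_δ0] at hfin
    have hfin' : -W t0 ≤ 0 := hfin
    linarith
  -- upper bound
  intro t ht
  refine ⟨hlow t ht, ?_⟩
  have hsub : Icc T1 t ⊆ Icc T1 T2 := Icc_subset_Icc le_rfl ht.2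
  have huIcc : uIcc T1 t = Icc T1 t := uIcc_of_le ht.1
  have hfc : ContinuousOn (fun s => A s * (W s - W1 s) * (W s - W2 s)) (Icc T1 t) :=
    (((hAc.mono hsub).mul ((hWc.mono hsub).sub (hW1c.mono hsub))).mul
      ((hWc.mono hsub).sub (hW2c.mono hsub)))
  have hgc : ContinuousOn (fun s => -(1/4) * (A s * (W2 s - W1 s)^2)) (Icc T1 t) :=
    (continuousOn_const.mul ((hAc.mono hsub).mul
      (((hW2c.mono hsub).sub (hW1c.mono hsub)).pow 2)))
  have hfint : IntervalIntegrable (fun s => A s * (W s - W1 s) * (W s - W2 s))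
      MeasureTheory.volume T1 t := (huIcc ▸ hfc).intervalIntegrable
  have hgint : IntervalIntegrable (fun s => -(1/4) * (A s * (W2 s - W1 s)^2))
      MeasureTheory.volume T1 t := (huIcc ▸ hgc).intervalIntegrable
  have hftc : ∫ s in T1..t, A s * (W s - W1 s) * (W s - W2 s) = W t - W T1 :=
    intervalIntegral.integral_eq_sub_of_hasDerivAt
      (fun x hx => hode x (hsub (huIcc ▸ hx))) hfint
  have hmono : ∫ s in T1..t, A s * (W s - W1 s) * (W s - W2 s)
      ≤ ∫ s in T1..t, -(1/4) * (A s * (W2 s - W1 s)^2) := by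
    apply intervalIntegral.integral_mono_on ht.1 hfint hgint
    intro x hx
    have hxI : x ∈ Icc T1 T2 := hsub hx
    nlinarith [mul_nonpos_of_nonpos_of_nonneg (hA x hxI).le
      (sq_nonneg (2 * W x - W1 x - W2 x))]
  have hconst : ∫ s in T1..t, -(1/4) * (A s * (W2 s - W1 s)^2)
      = -(1/4) * ∫ s in T1..t, A s * (W2 s - W1 s)^2 :=
    intervalIntegral.integral_const_mul _ _
  rw [hconst, hftc] at hmono
  linarith
end

section
/- Let x : [0,t] → [x_B, ∞) satisfy x'(s) = λ1(x(s),s) with 0 < S(x(s),s) ≤ λ1(x(s),s), and let k : [x_B, ∞) → [0,∞) be nonincreasing with ∫_{x_B}^∞ k(y) dy < ∞ and bounded by ‖k‖. Then ∫₀^t k(x(s))² S(x(s),s) ds ≤ ‖k‖ ∫_{x_B}^∞ k(y) dy. -/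
/-! Since `S ≤ λ₁ = x'`, the integrand is bounded by `‖k‖ · k(x(s)) · x'(s)`, and the substitution
`y = x(s)` (valid because `x' > 0` makes `x` injective) turns the integral of the latter into
`∫_{x([0,t])} k ≤ ∫_{x_B}^∞ k`. -/

open Set MeasureTheory

theorem strictMonoOn_of_hasDerivAt_pos {D : Set ℝ} (hD : Convex ℝ D) {f f' : ℝ → ℝ}
    (hf : ∀ s ∈ D, HasDerivAt f (f' s) s) (hpos : ∀ s ∈ D, 0 < f' s) : StrictMonoOn f D :=
  strictMonoOn_of_hasDerivWithinAt_pos hD (fun s hs => (hf s hs).continuousAt.continuousWithinAt)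
    (fun s hs => (hf s (interior_subset hs)).hasDerivWithinAt) (fun s hs => hpos s (interior_subset hs))

theorem integral_le_of_lintegral_ofReal_le {α : Type*} [MeasurableSpace α] {μ : Measure α}
    {f : α → ℝ} {c : ℝ} (hf : 0 ≤ᵐ[μ] f) (hc : 0 ≤ c)
    (h : ∫⁻ a, ENNReal.ofReal (f a) ∂μ ≤ ENNReal.ofReal c) : ∫ a, f a ∂μ ≤ c :=
  calc ∫ a, f a ∂μ ≤ ‖∫ a, f a ∂μ‖ := Real.le_norm_self _
    _ ≤ (∫⁻ a, ENNReal.ofReal ‖f a‖ ∂μ).toReal := norm_integral_le_lintegral_norm f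
    _ = (∫⁻ a, ENNReal.ofReal (f a) ∂μ).toReal := by
        congr 1
        exact lintegral_congr_ae (hf.mono fun a ha => congrArg ENNReal.ofReal (Real.norm_of_nonneg ha))
    _ ≤ c := ENNReal.toReal_le_of_le_ofReal hc h

theorem stmt16_general (x_B t K : ℝ) (ht : 0 ≤ t)
    (x S lam1 k : ℝ → ℝ)
    (hx0 : x_B ≤ x 0)
    (hx : ∀ s ∈ Icc 0 t, HasDerivAt x (lam1 s) s)
    (hS : ∀ s ∈ Icc 0 t, 0 < S s ∧ S s ≤ lam1 s)
    (hk0 : ∀ y, 0 ≤ k y) (hkK : ∀ y, k y ≤ K)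
    (hkint : MeasureTheory.IntegrableOn k (Ici x_B)) :
    ∫ s in (0:ℝ)..t, (k (x s))^2 * S s ≤ K * ∫ y in Ici x_B, k y := by
  have hK : 0 ≤ K := (hk0 0).trans (hkK 0)
  have hmono : StrictMonoOn x (Icc 0 t) :=
    strictMonoOn_of_hasDerivAt_pos (convex_Icc 0 t) hx fun s hs => (hS s hs).1.trans_le (hS s hs).2
  have himage : x '' Ioc 0 t ⊆ Ici x_B := by
    rintro _ ⟨s, hs, rfl⟩
    exact hx0.trans (hmono (left_mem_Icc.2 ht) (Ioc_subset_Icc_self hs) hs.1).le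
  have hbound : ∀ s ∈ Ioc 0 t, ENNReal.ofReal (k (x s) ^ 2 * S s) ≤
      ENNReal.ofReal |lam1 s| * ENNReal.ofReal (K * k (x s)) := fun s hs => by
    obtain ⟨-, hSl⟩ := hS s (Ioc_subset_Icc_self hs)
    rw [← ENNReal.ofReal_mul (abs_nonneg _), sq, mul_comm]
    exact ENNReal.ofReal_le_ofReal <| mul_le_mul (hSl.trans (le_abs_self _))
      (mul_le_mul_of_nonneg_right (hkK _) (hk0 _)) (mul_nonneg (hk0 _) (hk0 _)) (abs_nonneg _)
  rw [intervalIntegral.integral_of_le ht, ← integral_const_mul]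
  refine integral_le_of_lintegral_ofReal_le ?_
    (integral_nonneg fun y => mul_nonneg hK (hk0 y)) ?_
  · filter_upwards [ae_restrict_mem measurableSet_Ioc] with s hs
    exact mul_nonneg (sq_nonneg _) (hS s (Ioc_subset_Icc_self hs)).1.le
  calc ∫⁻ s in Ioc 0 t, ENNReal.ofReal (k (x s) ^ 2 * S s)
      ≤ ∫⁻ s in Ioc 0 t, ENNReal.ofReal |lam1 s| * ENNReal.ofReal (K * k (x s)) :=
        setLIntegral_mono' measurableSet_Ioc hbound
    _ = ∫⁻ y in x '' Ioc 0 t, ENNReal.ofReal (K * k y) :=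
        (lintegral_image_eq_lintegral_abs_deriv_mul measurableSet_Ioc
          (fun s hs => (hx s (Ioc_subset_Icc_self hs)).hasDerivWithinAt)
          (hmono.injOn.mono Ioc_subset_Icc_self) fun y => ENNReal.ofReal (K * k y)).symm
    _ ≤ ∫⁻ y in Ici x_B, ENNReal.ofReal (K * k y) := lintegral_mono_set himage
    _ = ENNReal.ofReal (∫ y in Ici x_B, K * k y) :=
        (ofReal_integral_eq_lintegral_ofReal (hkint.const_mul K)
          (ae_of_all _ fun y => mul_nonneg hK (hk0 y))).symm

theorem stmt16 (x_B t K : ℝ) (ht : 0 ≤ t)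
    (x S lam1 k : ℝ → ℝ)
    (hx0 : x_B ≤ x 0)
    (hx : ∀ s ∈ Icc 0 t, HasDerivAt x (lam1 s) s)
    (hS : ∀ s ∈ Icc 0 t, 0 < S s ∧ S s ≤ lam1 s)
    (hSc : ContinuousOn S (Icc 0 t))
    (hl1c : ContinuousOn lam1 (Icc 0 t))
    (hkanti : AntitoneOn k (Ici x_B))
    (hk0 : ∀ y, 0 ≤ k y) (hkK : ∀ y, k y ≤ K)
    (hkint : MeasureTheory.IntegrableOn k (Ici x_B)) :
    ∫ s in (0:ℝ)..t, (k (x s))^2 * S s ≤ K * ∫ y in Ici x_B, k y :=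
  stmt16_general x_B t K ht x S lam1 k hx0 hx hS hk0 hkK hkint
end
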